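/- Let C_n be the cycle on n ≥ 3 vertices. Then α_{0-reg}(C_n) = ⌊n/2⌋; for k = 1, α_{1-reg}(C_n) = 2a if n = 3a or n = 3a+1, and α_{1-reg}(C_n) = 2a+1 if n = 3a+2 (equivalently, α_{1-reg}(C_n) = n − ⌈n/3⌉); and α_{k-reg}(C_n) = n for every k ≥ 2. -/

import Mathlib

/-!
Every cycle is 2-regular, so every vertex set is regular and `α_{k-reg}(C_n)` is the ordinary
`k`-independence number; for `k ≥ 2` the whole vertex set qualifies. For `k = 0` (resp. `k = 1`)
a `k`-independent set contains no translate of `{0, 1}` (resp. `{0, 1, 2}`) in `ℤ/n`, and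
averaging over all translates bounds its density by `1/2` (resp. `2/3`). The bounds are attained
by the even (resp. `≢ 2 mod 3`) vertices below `n - 1`: leaving out the last vertex makes the cycle
a path, so no wrap-around adjacency can spoil them.
-/

open SimpleGraph

/-- The degree of a vertex `v` in `G`: the number of neighbors of `v`. -/
noncomputable def degN {V : Type*} (G : SimpleGraph V) (v : V) : ℕ := {u | G.Adj v u}.ncard

/-- A set of vertices is `k`-independent if the induced subgraph has maximum degree at
most `k`, i.e. every vertex of the set has at most `k` neighbors inside the set. -/
def IsKIndepSet {V : Type*} (G : SimpleGraph V) (k : ℕ) (S : Set V) : Prop :=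
  ∀ v ∈ S, {u | u ∈ S ∧ G.Adj v u}.ncard ≤ k

/-- A set of vertices is regular if all its vertices have the same degree in `G`. -/
def IsRegularSet {V : Type*} (G : SimpleGraph V) (S : Set V) : Prop :=
  ∀ u ∈ S, ∀ v ∈ S, degN G u = degN G v

/-- The regular `k`-independence number `α_{k-reg}(G)`: the maximum cardinality of a set
of vertices that is both `k`-independent and regular. -/
noncomputable def regKIndepNum {V : Type*} (G : SimpleGraph V) (k : ℕ) : ℕ :=
  sSup {m : ℕ | ∃ S : Set V, S.ncard = m ∧ IsKIndepSet G k S ∧ IsRegularSet G S}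

open Finset in
theorem card_mul_card_le_of_forall_not_translate_subset {G : Type*} [AddGroup G] [Fintype G]
    [DecidableEq G] {D T : Finset G} (h : ∀ v, ¬∀ d ∈ D, v + d ∈ T) :
    #D * #T ≤ (#D - 1) * Fintype.card G := by
  have hwindow (v : G) : #{d ∈ D | v + d ∈ T} ≤ #D - 1 := by
    have := card_lt_card (filter_ssubset.2 (by simpa using h v))
    omega
  have htranslate (d : G) : ∑ v, (if v + d ∈ T then 1 else 0) = #T :=
    (Fintype.sum_equiv (Equiv.addRight d) _ (fun v => if v ∈ T then 1 else 0) fun _ => rfl).trans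
      (by simp)
  calc #D * #T = ∑ d ∈ D, ∑ v, (if v + d ∈ T then 1 else 0) := by simp [htranslate]
    _ = ∑ v, #{d ∈ D | v + d ∈ T} := by simp only [card_filter]; exact sum_comm
    _ ≤ ∑ _v : G, (#D - 1) := sum_le_sum fun v _ => hwindow v
    _ = (#D - 1) * Fintype.card G := by simp [mul_comm]

section RegularSets

variable {V : Type*} {G : SimpleGraph V}

theorem isKIndepSet_zero_iff [Finite V] {S : Set V} :
    IsKIndepSet G 0 S ↔ ∀ u ∈ S, ∀ v ∈ S, ¬G.Adj u v := by
  simp only [IsKIndepSet, nonpos_iff_eq_zero, Set.ncard_eq_zero (Set.toFinite _),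
    Set.eq_empty_iff_forall_notMem, Set.mem_ofPred_eq, not_and]

theorem isKIndepSet_one_iff [Finite V] {S : Set V} :
    IsKIndepSet G 1 S ↔ ∀ v ∈ S, ∀ a ∈ S, G.Adj v a → ∀ b ∈ S, G.Adj v b → a = b := by
  simp only [IsKIndepSet, Set.ncard_le_one (Set.toFinite _), Set.mem_ofPred_eq, and_imp]

variable [G.LocallyFinite] {d : ℕ}

theorem degN_eq_degree (v : V) : degN G v = G.degree v := by
  rw [← card_neighborSet_eq_degree, ← Nat.card_eq_fintype_card, Nat.card_coe_set_eq]
  rfl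

theorem SimpleGraph.IsRegularOfDegree.isRegularSet (hG : G.IsRegularOfDegree d) (S : Set V) :
    IsRegularSet G S := fun u _ v _ => by rw [degN_eq_degree, degN_eq_degree, hG u, hG v]

theorem SimpleGraph.IsRegularOfDegree.isKIndepSet (hG : G.IsRegularOfDegree d) {k : ℕ}
    (hdk : d ≤ k) (S : Set V) : IsKIndepSet G k S := fun v _ =>
  calc {u | u ∈ S ∧ G.Adj v u}.ncard ≤ (G.neighborSet v).ncard :=
        Set.ncard_le_ncard (fun _ hu => hu.2)
    _ = d := by rw [← hG v, ← degN_eq_degree]; rfl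
    _ ≤ k := hdk

theorem SimpleGraph.IsRegularOfDegree.regKIndepNum_eq (hG : G.IsRegularOfDegree d)
    {k a : ℕ} {S : Set V} (hS : IsKIndepSet G k S) (hSa : S.ncard = a)
    (hmax : ∀ T, IsKIndepSet G k T → T.ncard ≤ a) : regKIndepNum G k = a :=
  IsGreatest.csSup_eq ⟨⟨S, hSa, hS, hG.isRegularSet S⟩, by
    rintro _ ⟨T, rfl, hT, -⟩
    exact hmax T hT⟩

theorem SimpleGraph.IsRegularOfDegree.regKIndepNum_eq_card [Finite V]
    (hG : G.IsRegularOfDegree d) {k : ℕ} (hdk : d ≤ k) : regKIndepNum G k = Nat.card V :=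
  hG.regKIndepNum_eq (hG.isKIndepSet hdk Set.univ) (Set.ncard_univ V) fun T _ =>
    Set.ncard_le_card T

end RegularSets

theorem cycleGraph_isRegularOfDegree (n : ℕ) : (cycleGraph (n + 3)).IsRegularOfDegree 2 :=
  fun _ => cycleGraph_degree_three_le

theorem cycleGraph_adj_add_one {n : ℕ} (v : Fin (n + 2)) : (cycleGraph (n + 2)).Adj v (v + 1) :=
  cycleGraph_adj.2 (Or.inr (add_sub_cancel_left v 1))

theorem cycleGraph_adj_iff_of_lt {n : ℕ} {u v : Fin (n + 1)} (hu : u.val < n) (hv : v.val < n) :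
    (cycleGraph (n + 1)).Adj u v ↔ u.val + 1 = v.val ∨ v.val + 1 = u.val := by
  rw [cycleGraph_adj']
  rcases lt_or_ge u v with h | h
  · rw [Fin.coe_sub_iff_lt.2 h, Fin.coe_sub_iff_le.2 h.le]
    omega
  · rw [Fin.coe_sub_iff_le.2 h]
    rcases h.lt_or_eq with h | rfl
    · rw [Fin.coe_sub_iff_lt.2 h]
      omega
    · simp

theorem ncard_le_of_isKIndepSet_zero_cycleGraph {n : ℕ} {S : Set (Fin (n + 2))}
    (hS : IsKIndepSet (cycleGraph (n + 2)) 0 S) : S.ncard ≤ (n + 2) / 2 := by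
  classical
  have hD : Finset.card ({0, 1} : Finset (Fin (n + 2))) = 2 := Finset.card_pair (by simp)
  have := card_mul_card_le_of_forall_not_translate_subset (D := {0, 1}) (T := S.toFinset)
    fun v hv => isKIndepSet_zero_iff.1 hS v (by simpa using hv 0 (by simp)) (v + 1)
      (by simpa using hv 1 (by simp)) (cycleGraph_adj_add_one v)
  rw [hD, Fintype.card_fin, ← Set.ncard_eq_toFinset_card'] at this
  omega

theorem ncard_le_of_isKIndepSet_one_cycleGraph {n : ℕ} {S : Set (Fin (n + 3))}
    (hS : IsKIndepSet (cycleGraph (n + 3)) 1 S) : S.ncard ≤ (n + 3) - (n + 5) / 3 := by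
  classical
  have hD : Finset.card ({0, 1, 2} : Finset (Fin (n + 3))) = 3 :=
    Finset.card_eq_three.2 ⟨0, 1, 2, by simp, by simp [Fin.ext_iff, Nat.mod_eq_of_lt],
      by simp [Fin.ext_iff, Nat.mod_eq_of_lt], rfl⟩
  have hwindow (v : Fin (n + 3)) (hv : ∀ d ∈ ({0, 1, 2} : Finset _), v + d ∈ S.toFinset) :
      False := by
    have h2 : v + 1 + 1 = v + 2 := by abel
    have := isKIndepSet_one_iff.1 hS (v + 1) (by simpa using hv 1 (by simp)) v
      (by simpa using hv 0 (by simp)) (cycleGraph_adj_add_one v).symm (v + 2)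
      (by simpa using hv 2 (by simp)) (h2 ▸ cycleGraph_adj_add_one (v + 1))
    simp [Fin.ext_iff, Nat.mod_eq_of_lt] at this
  have := card_mul_card_le_of_forall_not_translate_subset hwindow
  rw [hD, Fintype.card_fin, ← Set.ncard_eq_toFinset_card'] at this
  omega

open scoped Count in
theorem ncard_setOf_lt_and (n : ℕ) (p : ℕ → Prop) [DecidablePred p] :
    {v : Fin (n + 1) | v.val < n ∧ p v.val}.ncard = Nat.count p n := by
  rw [Nat.count_eq_card_fintype, ← Nat.card_eq_fintype_card, ← Nat.card_coe_set_eq]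
  exact Nat.card_congr
    { toFun := fun v => ⟨v.1.val, v.2⟩
      invFun := fun k => ⟨⟨k.1, by omega⟩, k.2⟩
      left_inv := fun _ => rfl
      right_inv := fun _ => rfl }

theorem isKIndepSet_zero_setOf_lt_and {n : ℕ} {p : ℕ → Prop} (hp : ∀ i, p i → ¬p (i + 1)) :
    IsKIndepSet (cycleGraph (n + 1)) 0 {v : Fin (n + 1) | v.val < n ∧ p v.val} := by
  refine isKIndepSet_zero_iff.2 fun u ⟨hu, hpu⟩ v ⟨hv, hpv⟩ huv => ?_
  rcases (cycleGraph_adj_iff_of_lt hu hv).1 huv with h | h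
  · exact hp _ hpu (h ▸ hpv)
  · exact hp _ hpv (h ▸ hpu)

theorem isKIndepSet_one_setOf_lt_and {n : ℕ} {p : ℕ → Prop}
    (hp : ∀ i, p i → p (i + 1) → ¬p (i + 2)) :
    IsKIndepSet (cycleGraph (n + 1)) 1 {v : Fin (n + 1) | v.val < n ∧ p v.val} := by
  refine isKIndepSet_one_iff.2 fun v ⟨hv, hpv⟩ a ⟨ha, hpa⟩ hva b ⟨hb, hpb⟩ hvb => ?_
  rw [cycleGraph_adj_iff_of_lt hv ha] at hva
  rw [cycleGraph_adj_iff_of_lt hv hb] at hvb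
  rw [Fin.ext_iff]
  by_contra hab
  have hrun : ∃ i, p i ∧ p (i + 1) ∧ p (i + 2) := by
    rcases hva with hva | hva <;> rcases hvb with hvb | hvb
    · omega
    · exact ⟨b.val, hpb, by rwa [show b.val + 1 = v.val by omega],
        by rwa [show b.val + 2 = a.val by omega]⟩
    · exact ⟨a.val, hpa, by rwa [show a.val + 1 = v.val by omega],
        by rwa [show a.val + 2 = b.val by omega]⟩
    · omega
  obtain ⟨i, h0, h1, h2⟩ := hrun
  exact hp i h0 h1 h2

theorem count_mod_two_eq_zero (n : ℕ) : Nat.count (· % 2 = 0) n = (n + 1) / 2 := by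
  induction n with
  | zero => rfl
  | succ n ih => rw [Nat.count_succ, ih]; split <;> omega

theorem count_mod_three_ne_two (n : ℕ) : Nat.count (· % 3 ≠ 2) n = n - n / 3 := by
  induction n with
  | zero => rfl
  | succ n ih => rw [Nat.count_succ, ih]; split <;> omega

/-- Regular `k`-independence numbers of the cycle `C_n` for `n ≥ 3`:
`α_{0-reg}(C_n) = ⌊n/2⌋`, `α_{1-reg}(C_n) = n - ⌈n/3⌉`, and
`α_{k-reg}(C_n) = n` for all `k ≥ 2`. -/
theorem stmt_4 (n : ℕ) (hn : 3 ≤ n) :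
    regKIndepNum (cycleGraph n) 0 = n / 2 ∧
    regKIndepNum (cycleGraph n) 1 = n - (n + 2) / 3 ∧
    ∀ k : ℕ, 2 ≤ k → regKIndepNum (cycleGraph n) k = n := by
  obtain ⟨m, rfl⟩ : ∃ m, n = m + 3 := ⟨n - 3, by omega⟩
  have hreg := cycleGraph_isRegularOfDegree m
  refine ⟨?_, ?_, fun k hk => ?_⟩
  · refine hreg.regKIndepNum_eq (isKIndepSet_zero_setOf_lt_and (p := (· % 2 = 0)) (by omega))
      ?_ fun T hT => ncard_le_of_isKIndepSet_zero_cycleGraph hT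
    exact (ncard_setOf_lt_and (m + 2) _).trans (count_mod_two_eq_zero _)
  · refine hreg.regKIndepNum_eq (isKIndepSet_one_setOf_lt_and (p := (· % 3 ≠ 2)) (by omega))
      ?_ fun T hT => ncard_le_of_isKIndepSet_one_cycleGraph hT
    rw [ncard_setOf_lt_and (m + 2) (· % 3 ≠ 2), count_mod_three_ne_two]
    omega
  · rw [hreg.regKIndepNum_eq_card hk, Nat.card_eq_fintype_card, Fintype.card_fin]
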